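/- Let A ∈ ℝ^{m×m×n} be (1,2)-symmetric and nonnegative with structure A = [0 B; B' 0], where B ∈ ℝ^{m₁×m₂×n} and B' has 3-slices equal to transposes of those of B. Assume the best rank-(1,1,1) approximation of B is unique and given by nonnegative (u, v, w) with B·(u,v) = τ w. Set U = [0 u; v 0] ∈ ℝ^{m×2}. Then (U, U, w) is the best rank-(2,2,1) approximation of A, and the core tensor is F = [0 τ; τ 0] ∈ ℝ^{2×2×1}. -/

import Mathlib

/-
For factors with orthonormal columns, `‖A - (X,X,Z)·H‖² = ‖A‖² - ‖G‖² + ‖H - G‖²` with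
`G = (Xᵀ,Xᵀ,Zᵀ)·A` (Pythagoras for the projection onto the range of `X ⊗ X ⊗ Z`), so a best
rank-(2,2,1) approximation maximizes `‖G‖²`. Here `G` is a symmetric `2 × 2` matrix with quadratic
form `y ↦ A·(y,y,z) = 2 B·(y₁,y₂,z)`, which is bounded by `τ ‖y‖²` because `τ` is the maximum of
`|B·(x,y,z)|` over unit vectors; hence `‖G‖² ≤ 2τ²`, and `U = [0 u; v 0]`, `W = w` attain it.
-/


open scoped BigOperators
open Sum

noncomputable section

/-- Multilinear (Tucker) tensor–matrix product: `(U,V,W)·A`. -/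
def tmul {ι₁ ι₂ ι₃ κ₁ κ₂ κ₃ : Type*} [Fintype ι₁] [Fintype ι₂] [Fintype ι₃]
    (U : κ₁ → ι₁ → ℝ) (V : κ₂ → ι₂ → ℝ) (W : κ₃ → ι₃ → ℝ)
    (A : ι₁ → ι₂ → ι₃ → ℝ) : κ₁ → κ₂ → κ₃ → ℝ :=
  fun i j k => ∑ a, ∑ b, ∑ c, U i a * V j b * W k c * A a b c

/-- Squared Frobenius norm of a 3-tensor. -/
def fro2 {ι₁ ι₂ ι₃ : Type*} [Fintype ι₁] [Fintype ι₂] [Fintype ι₃]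
    (A : ι₁ → ι₂ → ι₃ → ℝ) : ℝ := ∑ i, ∑ j, ∑ k, (A i j k) ^ 2

/-- Frobenius norm of a 3-tensor. -/
def fro {ι₁ ι₂ ι₃ : Type*} [Fintype ι₁] [Fintype ι₂] [Fintype ι₃]
    (A : ι₁ → ι₂ → ι₃ → ℝ) : ℝ := Real.sqrt (fro2 A)

/-- Trilinear form `A·(x,y,z)`. -/
def tri {ι₁ ι₂ ι₃ : Type*} [Fintype ι₁] [Fintype ι₂] [Fintype ι₃]
    (A : ι₁ → ι₂ → ι₃ → ℝ) (x : ι₁ → ℝ) (y : ι₂ → ℝ) (z : ι₃ → ℝ) : ℝ :=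
  ∑ i, ∑ j, ∑ k, A i j k * x i * y j * z k

/-- Unit vector (Euclidean norm 1). -/
def unitVec {ι : Type*} [Fintype ι] (x : ι → ℝ) : Prop := ∑ i, x i ^ 2 = 1

/-- A matrix (given as a family of rows) has orthonormal columns. -/
def orthCols {ι κ : Type*} [Fintype ι] [DecidableEq κ] (X : ι → κ → ℝ) : Prop :=
  ∀ a b, (∑ i, X i a * X i b) = if a = b then (1 : ℝ) else 0

open Matrix
open scoped Kronecker

section Flatten

variable {ι₁ ι₂ ι₃ κ₁ κ₂ κ₃ : Type*}

def vec3 (A : ι₁ → ι₂ → ι₃ → ℝ) : ι₁ × ι₂ × ι₃ → ℝ := fun i => A i.1 i.2.1 i.2.2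

lemma vec3_sub (A A' : ι₁ → ι₂ → ι₃ → ℝ) :
    vec3 (fun p q k => A p q k - A' p q k) = vec3 A - vec3 A' := rfl

lemma vec3_tmul [Fintype κ₁] [Fintype κ₂] [Fintype κ₃] (X : Matrix ι₁ κ₁ ℝ) (Y : Matrix ι₂ κ₂ ℝ)
    (Z : Matrix ι₃ κ₃ ℝ) (H : κ₁ → κ₂ → κ₃ → ℝ) :
    vec3 (tmul X Y Z H) = X ⊗ₖ (Y ⊗ₖ Z) *ᵥ vec3 H := by
  ext ⟨p, q, k⟩
  simp only [vec3, tmul, mulVec, dotProduct, Fintype.sum_prod_type, kroneckerMap_apply, mul_assoc]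

variable [Fintype ι₁] [Fintype ι₂] [Fintype ι₃]

/-- The core `(Xᵀ, Yᵀ, Zᵀ)·A`, optimal for the factors `X, Y, Z` when they have orthonormal
columns. -/
def tuckerCore (X : ι₁ → κ₁ → ℝ) (Y : ι₂ → κ₂ → ℝ) (Z : ι₃ → κ₃ → ℝ)
    (A : ι₁ → ι₂ → ι₃ → ℝ) : κ₁ → κ₂ → κ₃ → ℝ :=
  fun a b c => tri A (fun p => X p a) (fun q => Y q b) (fun k => Z k c)

lemma fro2_eq_dotProduct (A : ι₁ → ι₂ → ι₃ → ℝ) : fro2 A = vec3 A ⬝ᵥ vec3 A := by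
  simp only [fro2, dotProduct, vec3, Fintype.sum_prod_type, sq]

lemma vec3_tuckerCore (X : Matrix ι₁ κ₁ ℝ) (Y : Matrix ι₂ κ₂ ℝ) (Z : Matrix ι₃ κ₃ ℝ)
    (A : ι₁ → ι₂ → ι₃ → ℝ) :
    vec3 (tuckerCore X Y Z A) = (X ⊗ₖ (Y ⊗ₖ Z))ᵀ *ᵥ vec3 A := by
  ext ⟨a, b, c⟩
  simp only [vec3, tuckerCore, tri, mulVec, dotProduct, Fintype.sum_prod_type, transpose_apply,
    kroneckerMap_apply]
  refine Finset.sum_congr rfl fun _ _ => Finset.sum_congr rfl fun _ _ =>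
    Finset.sum_congr rfl fun _ _ => by ring

end Flatten

lemma orthCols_iff_transpose_mul_self {ι κ : Type*} [Fintype ι] [DecidableEq κ]
    (X : Matrix ι κ ℝ) : orthCols X ↔ Xᵀ * X = 1 := by
  simp only [orthCols, ← ext_iff, mul_apply, transpose_apply, one_apply]

lemma transpose_mul_self_kronecker {ι₁ ι₂ κ₁ κ₂ : Type*} [Fintype ι₁] [Fintype ι₂]
    [DecidableEq κ₁] [DecidableEq κ₂] {X : Matrix ι₁ κ₁ ℝ} {Y : Matrix ι₂ κ₂ ℝ}
    (hX : Xᵀ * X = 1) (hY : Yᵀ * Y = 1) : (X ⊗ₖ Y)ᵀ * (X ⊗ₖ Y) = 1 := by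
  rw [← kroneckerMap_transpose, ← mul_kronecker_mul, hX, hY, one_kronecker_one]

section Projection

variable {m k : Type*} [Fintype m] [Fintype k] [DecidableEq k] {K : Matrix m k ℝ}

lemma mulVec_dotProduct_mulVec_self (hK : Kᵀ * K = 1) (h : k → ℝ) :
    K *ᵥ h ⬝ᵥ K *ᵥ h = h ⬝ᵥ h := by
  rw [dotProduct_mulVec, vecMul_mulVec, hK, vecMul_one]

lemma dotProduct_sub_mulVec_self (hK : Kᵀ * K = 1) (a : m → ℝ) (h : k → ℝ) :
    (a - K *ᵥ h) ⬝ᵥ (a - K *ᵥ h)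
      = a ⬝ᵥ a - Kᵀ *ᵥ a ⬝ᵥ Kᵀ *ᵥ a + (h - Kᵀ *ᵥ a) ⬝ᵥ (h - Kᵀ *ᵥ a) := by
  have hadj : a ⬝ᵥ K *ᵥ h = Kᵀ *ᵥ a ⬝ᵥ h := by rw [dotProduct_mulVec, mulVec_transpose]
  simp only [sub_dotProduct, dotProduct_sub, mulVec_dotProduct_mulVec_self hK, hadj,
    dotProduct_comm h, dotProduct_comm (K *ᵥ h) a]
  ring

end Projection

lemma fro2_sub_tmul {ι₁ ι₂ ι₃ κ₁ κ₂ κ₃ : Type*} [Fintype ι₁] [Fintype ι₂] [Fintype ι₃]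
    [Fintype κ₁] [Fintype κ₂] [Fintype κ₃] [DecidableEq κ₁] [DecidableEq κ₂] [DecidableEq κ₃]
    {X : Matrix ι₁ κ₁ ℝ} {Y : Matrix ι₂ κ₂ ℝ} {Z : Matrix ι₃ κ₃ ℝ}
    (hX : orthCols X) (hY : orthCols Y) (hZ : orthCols Z)
    (A : ι₁ → ι₂ → ι₃ → ℝ) (H : κ₁ → κ₂ → κ₃ → ℝ) :
    fro2 (fun p q k => A p q k - tmul X Y Z H p q k)
      = fro2 A - fro2 (tuckerCore X Y Z A)
        + fro2 (fun a b c => H a b c - tuckerCore X Y Z A a b c) := by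
  simp only [fro2_eq_dotProduct, vec3_sub, vec3_tmul, vec3_tuckerCore]
  rw [orthCols_iff_transpose_mul_self] at hX hY hZ
  exact dotProduct_sub_mulVec_self
    (transpose_mul_self_kronecker hX (transpose_mul_self_kronecker hY hZ)) _ _

lemma fro2_sub_tmul_tuckerCore_le {ι₁ ι₂ ι₃ κ₁ κ₂ κ₃ : Type*} [Fintype ι₁] [Fintype ι₂]
    [Fintype ι₃] [Fintype κ₁] [Fintype κ₂] [Fintype κ₃] [DecidableEq κ₁] [DecidableEq κ₂]
    [DecidableEq κ₃] {X X' : Matrix ι₁ κ₁ ℝ} {Y Y' : Matrix ι₂ κ₂ ℝ} {Z Z' : Matrix ι₃ κ₃ ℝ}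
    (hX : orthCols X) (hY : orthCols Y) (hZ : orthCols Z)
    (hX' : orthCols X') (hY' : orthCols Y') (hZ' : orthCols Z') {A : ι₁ → ι₂ → ι₃ → ℝ}
    (hle : fro2 (tuckerCore X' Y' Z' A) ≤ fro2 (tuckerCore X Y Z A)) (H : κ₁ → κ₂ → κ₃ → ℝ) :
    fro2 (fun p q k => A p q k - tmul X Y Z (tuckerCore X Y Z A) p q k)
      ≤ fro2 (fun p q k => A p q k - tmul X' Y' Z' H p q k) := by
  have h0 : fro2 (fun a b c => tuckerCore X Y Z A a b c - tuckerCore X Y Z A a b c) = 0 := by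
    simp [fro2]
  have hH : 0 ≤ fro2 fun a b c => H a b c - tuckerCore X' Y' Z' A a b c := by
    unfold fro2; positivity
  rw [fro2_sub_tmul hX hY hZ, fro2_sub_tmul hX' hY' hZ', h0]
  linarith

section Trilinear

variable {ι₁ ι₂ ι₃ : Type*} [Fintype ι₁] [Fintype ι₂] [Fintype ι₃] (A : ι₁ → ι₂ → ι₃ → ℝ)

@[simp] lemma tri_zero_left (y : ι₂ → ℝ) (z : ι₃ → ℝ) : tri A 0 y z = 0 := by simp [tri]

@[simp] lemma tri_zero_middle (x : ι₁ → ℝ) (z : ι₃ → ℝ) : tri A x 0 z = 0 := by simp [tri]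

@[simp] lemma tri_smul_left (a : ℝ) (x : ι₁ → ℝ) (y : ι₂ → ℝ) (z : ι₃ → ℝ) :
    tri A (a • x) y z = a * tri A x y z := by
  simp only [tri, Finset.mul_sum, Pi.smul_apply, smul_eq_mul]
  refine Finset.sum_congr rfl fun i _ => Finset.sum_congr rfl fun j _ =>
    Finset.sum_congr rfl fun k _ => by ring

@[simp] lemma tri_smul_middle (a : ℝ) (x : ι₁ → ℝ) (y : ι₂ → ℝ) (z : ι₃ → ℝ) :
    tri A x (a • y) z = a * tri A x y z := by
  simp only [tri, Finset.mul_sum, Pi.smul_apply, smul_eq_mul]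
  refine Finset.sum_congr rfl fun i _ => Finset.sum_congr rfl fun j _ =>
    Finset.sum_congr rfl fun k _ => by ring

@[simp] lemma tri_add_left (x x' : ι₁ → ℝ) (y : ι₂ → ℝ) (z : ι₃ → ℝ) :
    tri A (x + x') y z = tri A x y z + tri A x' y z := by
  simp only [tri, ← Finset.sum_add_distrib, Pi.add_apply]
  refine Finset.sum_congr rfl fun i _ => Finset.sum_congr rfl fun j _ =>
    Finset.sum_congr rfl fun k _ => by ring

@[simp] lemma tri_add_middle (x : ι₁ → ℝ) (y y' : ι₂ → ℝ) (z : ι₃ → ℝ) :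
    tri A x (y + y') z = tri A x y z + tri A x y' z := by
  simp only [tri, ← Finset.sum_add_distrib, Pi.add_apply]
  refine Finset.sum_congr rfl fun i _ => Finset.sum_congr rfl fun j _ =>
    Finset.sum_congr rfl fun k _ => by ring

end Trilinear

lemma sum_sq_pos {ι : Type*} [Fintype ι] {x : ι → ℝ} (hx : x ≠ 0) : 0 < ∑ i, x i ^ 2 :=
  lt_of_le_of_ne (by positivity) fun h => hx (dotProduct_self_eq_zero.mp (by
    simpa only [dotProduct, sq] using h.symm))

lemma unitVec_inv_sqrt_smul {ι : Type*} [Fintype ι] {x : ι → ℝ} (hx : x ≠ 0) :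
    unitVec ((√(∑ i, x i ^ 2))⁻¹ • x) := by
  have hpos := sum_sq_pos hx
  simp only [unitVec, Pi.smul_apply, smul_eq_mul, mul_pow, ← Finset.mul_sum, inv_pow,
    Real.sq_sqrt hpos.le]
  exact inv_mul_cancel₀ hpos.ne'

lemma abs_tri_le_of_unitVec {ι₁ ι₂ ι₃ : Type*} [Fintype ι₁] [Fintype ι₂] [Fintype ι₃]
    {B : ι₁ → ι₂ → ι₃ → ℝ} {τ : ℝ}
    (hB : ∀ x y z, unitVec x → unitVec y → unitVec z → |tri B x y z| ≤ τ)
    {z : ι₃ → ℝ} (hz : unitVec z) (x : ι₁ → ℝ) (y : ι₂ → ℝ) :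
    |tri B x y z| ≤ τ * √(∑ i, x i ^ 2) * √(∑ j, y j ^ 2) := by
  rcases eq_or_ne x 0 with rfl | hx
  · simp
  rcases eq_or_ne y 0 with rfl | hy
  · simp
  set a := √(∑ i, x i ^ 2)
  set b := √(∑ j, y j ^ 2)
  have ha : 0 < a := Real.sqrt_pos.mpr (sum_sq_pos hx)
  have hb : 0 < b := Real.sqrt_pos.mpr (sum_sq_pos hy)
  have hscale : tri B x y z = a * b * tri B (a⁻¹ • x) (b⁻¹ • y) z := by
    simp only [tri_smul_left, tri_smul_middle]
    field_simp
  rw [hscale, abs_mul, abs_of_pos (by positivity)]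
  nlinarith [hB _ _ _ (unitVec_inv_sqrt_smul hx) (unitVec_inv_sqrt_smul hy) hz, mul_pos ha hb]

section Bipartite

variable {ι₁ ι₂ κ : Type*} [Fintype ι₁] [Fintype ι₂] [Fintype κ]

def bipartite (B : ι₁ → ι₂ → κ → ℝ) : ι₁ ⊕ ι₂ → ι₁ ⊕ ι₂ → κ → ℝ :=
  Sum.elim (fun i => Sum.elim 0 (B i)) (fun j => Sum.elim (fun i => B i j) 0)

lemma tri_bipartite (B : ι₁ → ι₂ → κ → ℝ) (x y : ι₁ ⊕ ι₂ → ℝ) (z : κ → ℝ) :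
    tri (bipartite B) x y z = tri B (x ∘ inl) (y ∘ inr) z + tri B (y ∘ inl) (x ∘ inr) z := by
  simp only [tri, Fintype.sum_sum_type, bipartite, Sum.elim_inl, Sum.elim_inr, Pi.zero_apply,
    zero_mul, Finset.sum_const_zero, add_zero,
    zero_add, Function.comp_apply]
  congr 1
  rw [Finset.sum_comm]
  refine Finset.sum_congr rfl fun i _ => Finset.sum_congr rfl fun j _ =>
    Finset.sum_congr rfl fun k _ => by ring

lemma tri_bipartite_comm (B : ι₁ → ι₂ → κ → ℝ) (x y : ι₁ ⊕ ι₂ → ℝ) (z : κ → ℝ) :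
    tri (bipartite B) x y z = tri (bipartite B) y x z := by
  rw [tri_bipartite, tri_bipartite, add_comm]

lemma abs_tri_bipartite_self_le {B : ι₁ → ι₂ → κ → ℝ} {τ : ℝ} (hτ : 0 ≤ τ) {z : κ → ℝ}
    (hB : ∀ x y, |tri B x y z| ≤ τ * √(∑ i, x i ^ 2) * √(∑ j, y j ^ 2)) (y : ι₁ ⊕ ι₂ → ℝ) :
    |tri (bipartite B) y y z| ≤ τ * ∑ p, y p ^ 2 := by
  have hy := hB (y ∘ inl) (y ∘ inr)
  rw [tri_bipartite, ← two_mul, abs_mul, abs_two, Fintype.sum_sum_type]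
  simp only [Function.comp_apply] at hy ⊢
  have ha := Real.sq_sqrt (by positivity : 0 ≤ ∑ i, y (inl i) ^ 2)
  have hb := Real.sq_sqrt (by positivity : 0 ≤ ∑ j, y (inr j) ^ 2)
  nlinarith [mul_nonneg hτ (sq_nonneg (√(∑ i, y (inl i) ^ 2) - √(∑ j, y (inr j) ^ 2)))]

def blockFactor (u : ι₁ → ℝ) (v : ι₂ → ℝ) : ι₁ ⊕ ι₂ → Fin 2 → ℝ :=
  Sum.elim (fun i => ![0, u i]) (fun j => ![v j, 0])

lemma orthCols_blockFactor {u : ι₁ → ℝ} {v : ι₂ → ℝ} (hu : unitVec u) (hv : unitVec v) :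
    orthCols (blockFactor u v) := by
  unfold unitVec at hu hv
  intro a b
  fin_cases a <;> fin_cases b <;> simp [blockFactor, Fintype.sum_sum_type, ← sq, hu, hv]

lemma tri_bipartite_blockFactor (B : ι₁ → ι₂ → κ → ℝ) (u : ι₁ → ℝ) (v : ι₂ → ℝ) (z : κ → ℝ)
    (a b : Fin 2) :
    tri (bipartite B) (fun p => blockFactor u v p a) (fun q => blockFactor u v q b) z
      = if a = b then 0 else tri B u v z := by
  fin_cases a <;> fin_cases b <;>
    simp [tri_bipartite, blockFactor, Function.comp_def, ← Pi.zero_def]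

end Bipartite

/-- Both `τ I - g` and `τ I + g` are positive semidefinite; their determinants bound `g₀₁²`
and their traces bound `|g₀₀ + g₁₁|` by `2τ`. -/
lemma sq_add_two_mul_sq_add_sq_le {g₀₀ g₀₁ g₁₁ τ : ℝ}
    (h : ∀ c d : ℝ, |c ^ 2 * g₀₀ + 2 * c * d * g₀₁ + d ^ 2 * g₁₁| ≤ τ * (c ^ 2 + d ^ 2)) :
    g₀₀ ^ 2 + 2 * g₀₁ ^ 2 + g₁₁ ^ 2 ≤ 2 * τ ^ 2 := by
  have h₀₀ := abs_le.mp (h 1 0)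
  have h₁₁ := abs_le.mp (h 0 1)
  norm_num at h₀₀ h₁₁
  have hdet : discrim (τ - g₀₀) (-2 * g₀₁) (τ - g₁₁) ≤ 0 :=
    discrim_le_zero fun c => by nlinarith [(abs_le.mp (h c 1)).2]
  have hdet' : discrim (τ + g₀₀) (2 * g₀₁) (τ + g₁₁) ≤ 0 :=
    discrim_le_zero fun c => by nlinarith [(abs_le.mp (h c 1)).1]
  rw [discrim] at hdet hdet'
  rcases le_total 0 (g₀₀ + g₁₁) with ht | ht
  · nlinarith [mul_nonneg ht (by linarith : 0 ≤ 2 * τ - (g₀₀ + g₁₁))]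
  · nlinarith [mul_nonneg (neg_nonneg.mpr ht) (by linarith : 0 ≤ 2 * τ + (g₀₀ + g₁₁))]

lemma fro2_tuckerCore_le {ι κ : Type*} [Fintype ι] [Fintype κ] {A : ι → ι → κ → ℝ} {τ : ℝ}
    (hsymm : ∀ x y z, tri A x y z = tri A y x z)
    (hbound : ∀ y z, unitVec z → |tri A y y z| ≤ τ * ∑ p, y p ^ 2)
    {X : ι → Fin 2 → ℝ} {Z : κ → Fin 1 → ℝ} (hX : orthCols X) (hZ : orthCols Z) :
    fro2 (tuckerCore X X Z A) ≤ 2 * τ ^ 2 := by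
  set z := fun k => Z k 0
  have hz : unitVec z := by simpa [unitVec, sq] using hZ 0 0
  set g := fun a b => tri A (fun p => X p a) (fun p => X p b) z
  have hquad (c d : ℝ) : |c ^ 2 * g 0 0 + 2 * c * d * g 0 1 + d ^ 2 * g 1 1|
      ≤ τ * (c ^ 2 + d ^ 2) := by
    have hy : X *ᵥ ![c, d] = c • (fun p => X p 0) + d • (fun p => X p 1) := by
      ext p
      simp [mulVec, dotProduct, Fin.sum_univ_two, mul_comm]
    have hnorm : ∑ p, (X *ᵥ ![c, d]) p ^ 2 = c ^ 2 + d ^ 2 := by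
      have := mulVec_dotProduct_mulVec_self ((orthCols_iff_transpose_mul_self X).mp hX) ![c, d]
      simpa [dotProduct, Fin.sum_univ_two, sq] using this
    have := hbound (X *ᵥ ![c, d]) z hz
    rw [hnorm, hy] at this
    convert this using 2
    simp only [tri_add_left, tri_add_middle, tri_smul_left, tri_smul_middle, g]
    rw [hsymm (fun p => X p 1) (fun p => X p 0)]
    ring
  have hfro : fro2 (tuckerCore X X Z A) = g 0 0 ^ 2 + 2 * g 0 1 ^ 2 + g 1 1 ^ 2 := by
    simp only [fro2, tuckerCore, Fin.sum_univ_two, Fin.sum_univ_one, g, z]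
    rw [hsymm (fun p => X p 1) (fun p => X p 0)]
    ring
  exact hfro ▸ sq_add_two_mul_sq_add_sq_le hquad

theorem stmt_11 {m₁ m₂ n : ℕ}
    (B : Fin m₁ → Fin m₂ → Fin n → ℝ)
    (A : (Fin m₁ ⊕ Fin m₂) → (Fin m₁ ⊕ Fin m₂) → Fin n → ℝ)
    (hA : A = fun p q k => match p, q with
      | Sum.inl i, Sum.inr j => B i j k
      | Sum.inr i, Sum.inl j => B j i k
      | _, _ => 0)
    (u : Fin m₁ → ℝ) (v : Fin m₂ → ℝ) (w : Fin n → ℝ) (τ : ℝ)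
    (hu : unitVec u) (hv : unitVec v) (hw : unitVec w)
    (hopt : ∀ x y z, unitVec x → unitVec y → unitVec z →
      |tri B x y z| ≤ tri B u v w)
    (htau : tri B u v w = τ) :
    ∃ (U : (Fin m₁ ⊕ Fin m₂) → Fin 2 → ℝ) (W : Fin n → Fin 1 → ℝ),
      (∀ i, U (inl i) 0 = 0) ∧ (∀ i, U (inl i) 1 = u i) ∧
      (∀ j, U (inr j) 0 = v j) ∧ (∀ j, U (inr j) 1 = 0) ∧
      (∀ k, W k 0 = w k) ∧ orthCols U ∧ orthCols W ∧
      (∀ a b c, tri A (fun p => U p a) (fun q => U q b) (fun k => W k c)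
        = if a = b then 0 else τ) ∧
      (∀ (X : (Fin m₁ ⊕ Fin m₂) → Fin 2 → ℝ) (Z : Fin n → Fin 1 → ℝ)
        (H : Fin 2 → Fin 2 → Fin 1 → ℝ), orthCols X → orthCols Z →
        fro2 (fun p q k => A p q k -
          tmul U U W (fun a b c =>
            tri A (fun p => U p a) (fun q => U q b) (fun k => W k c)) p q k)
        ≤ fro2 (fun p q k => A p q k - tmul X X Z H p q k)) := by
  rw [htau] at hopt
  have hτ : 0 ≤ τ := (abs_nonneg _).trans (hopt u v w hu hv hw)
  obtain rfl : A = bipartite B := by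
    subst hA
    funext p q k
    rcases p with i | j <;> rcases q with i' | j' <;> rfl
  have hW : orthCols fun k (_ : Fin 1) => w k := fun a b => by
    simpa [unitVec, sq, Subsingleton.elim a b] using hw
  have hcore (a b : Fin 2) : tri (bipartite B) (fun p => blockFactor u v p a)
      (fun q => blockFactor u v q b) (fun k => w k) = if a = b then 0 else τ :=
    htau ▸ tri_bipartite_blockFactor B u v w a b
  refine ⟨blockFactor u v, fun k _ => w k, fun _ => rfl, fun _ => rfl, fun _ => rfl,
    fun _ => rfl, fun _ => rfl, orthCols_blockFactor hu hv, hW, fun a b _ => hcore a b,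
    fun X Z H hX hZ => fro2_sub_tmul_tuckerCore_le (orthCols_blockFactor hu hv)
      (orthCols_blockFactor hu hv) hW hX hX hZ ?_ H⟩
  calc fro2 (tuckerCore X X Z (bipartite B))
      ≤ 2 * τ ^ 2 := fro2_tuckerCore_le (tri_bipartite_comm B)
        (fun y z hz => abs_tri_bipartite_self_le hτ (abs_tri_le_of_unitVec hopt hz) y) hX hZ
    _ = fro2 (tuckerCore (blockFactor u v) (blockFactor u v) (fun k _ => w k) (bipartite B)) := by
        simp [fro2, tuckerCore, hcore, Fin.sum_univ_two]
        ring
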